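/- arXiv:2106.04634 — 3 statements merged into one kernel-verified Lean document; each statement's English description precedes it below -/
import Mathlib

section
/- On (ℂ²_{A₁} ⊗ ℂ²_B) ⊗ (ℂ²_{A₂} ⊗ ℂ²_C), let W = 𝟙⊗𝟙 + 2·𝟙⊗φ⁺ + 2·φ⁺⊗𝟙 − 8·φ⁺⊗φ⁺ (first tensor slot acting on A₁B, second on A₂C, φ⁺ the projector onto (|00⟩+|11⟩)/√2), and let σ_star(p) = ρ_{A₁B}(p) ⊗ ρ_{A₂C}(p) be the tensor product of two 2-dimensional isotropic states with visibility p. Then tr(W · σ_star(p)) = (3/2)(1 − 3p²). -/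
open scoped BigOperators ComplexOrder

noncomputable section

/-- Projector onto the `d`-dimensional maximally entangled state
`|φ⁺_d⟩ = (1/√d) ∑ᵢ |ii⟩`, as a matrix on `ℂ^d ⊗ ℂ^d`. -/
def phiPlus (d : ℕ) : Matrix (Fin d × Fin d) (Fin d × Fin d) ℂ :=
  fun x y => if x.1 = x.2 ∧ y.1 = y.2 then (1 / (d : ℂ)) else 0

/-- The `d`-dimensional isotropic state with visibility `p`:
`ρ(p) = p φ⁺_d + (1-p) 𝟙/d²`. -/
def iso (d : ℕ) (p : ℝ) : Matrix (Fin d × Fin d) (Fin d × Fin d) ℂ :=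
  (p : ℂ) • phiPlus d +
    (((1 - p) / (d : ℝ) ^ 2 : ℝ) : ℂ) • (1 : Matrix (Fin d × Fin d) (Fin d × Fin d) ℂ)

/-- The (possibly unnormalized) projector `|ψ⟩⟨ψ|` onto a vector `ψ`. -/
def vecProj {ι : Type} (ψ : ι → ℂ) : Matrix ι ι ℂ :=
  fun i j => ψ i * (starRingEnd ℂ) (ψ j)

/-- `m₁ ⊗ m₂` on the four-qubit space, the first factor acting on qubits `0, 1`
(i.e. `A₁B`) and the second on qubits `2, 3` (i.e. `A₂C`). -/
def sl (m₁ m₂ : Matrix (Fin 2 × Fin 2) (Fin 2 × Fin 2) ℂ) :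
    Matrix (Fin 4 → Fin 2) (Fin 4 → Fin 2) ℂ :=
  fun x y => m₁ (x 0, x 1) (y 0, y 1) * m₂ (x 2, x 3) (y 2, y 3)

/-- Partial transposition with respect to the qubits in `S`. -/
def ptr {n : ℕ} (S : Finset (Fin n))
    (X : Matrix (Fin n → Fin 2) (Fin n → Fin 2) ℂ) :
    Matrix (Fin n → Fin 2) (Fin n → Fin 2) ℂ :=
  fun x y => X (fun c => if c ∈ S then y c else x c) (fun c => if c ∈ S then x c else y c)

/-- The GME witness `W = 𝟙⊗𝟙 + 2 𝟙⊗φ⁺ + 2 φ⁺⊗𝟙 − 8 φ⁺⊗φ⁺` on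
`ℂ²_{A₁} ⊗ ℂ²_B ⊗ ℂ²_{A₂} ⊗ ℂ²_C` (qubits `0,1,2,3` = `A₁,B,A₂,C`). -/
noncomputable def Wstar : Matrix (Fin 4 → Fin 2) (Fin 4 → Fin 2) ℂ :=
  sl 1 1 + (2 : ℂ) • sl 1 (phiPlus 2) + (2 : ℂ) • sl (phiPlus 2) 1
    - (8 : ℂ) • sl (phiPlus 2) (phiPlus 2)

/-- `σ_star(p) = ρ_{A₁B}(p) ⊗ ρ_{A₂C}(p)` on qubits `0,1,2,3 = A₁,B,A₂,C`. -/
noncomputable def sigmaStar4 (p : ℝ) : Matrix (Fin 4 → Fin 2) (Fin 4 → Fin 2) ℂ :=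
  sl (iso 2 p) (iso 2 p)

/-- The equivalence between pairs of qubit-pairs and four-qubit configurations. -/
def e4 : ((Fin 2 × Fin 2) × (Fin 2 × Fin 2)) ≃ (Fin 4 → Fin 2) :=
  Equiv.ofBijective (fun q => ![q.1.1, q.1.2, q.2.1, q.2.2]) (by decide)

/-- Trace of a product of tensor products factorizes. -/
lemma trace_sl_mul (A B C D : Matrix (Fin 2 × Fin 2) (Fin 2 × Fin 2) ℂ) :
    (sl A B * sl C D).trace = (A * C).trace * (B * D).trace := by
  classical
  simp only [Matrix.trace, Matrix.diag, Matrix.mul_apply]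
  rw [← e4.sum_comp (fun x => ∑ y, sl A B x y * sl C D y x)]
  refine Eq.trans (Finset.sum_congr rfl fun q _ =>
    (e4.sum_comp (fun y => sl A B (e4 q) y * sl C D y (e4 q))).symm) ?_
  simp only [sl, e4, Equiv.ofBijective_apply, Matrix.cons_val_zero, Matrix.cons_val_one,
    Matrix.head_cons, Matrix.cons_val_two, Matrix.tail_cons, Matrix.cons_val_three,
    Fintype.sum_prod_type, Fin.sum_univ_two]
  ring

/-- `tr(W σ_star(p)) = (3/2)(1 − 3p²)`. -/
theorem Wstar_expectation (p : ℝ) :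
    Matrix.trace (Wstar * sigmaStar4 p) = ((3 : ℂ) / 2) * (1 - 3 * (p : ℂ) ^ 2) := by
  have h1 : ((1 : Matrix (Fin 2 × Fin 2) (Fin 2 × Fin 2) ℂ) * iso 2 p).trace = 1 := by
    simp [Matrix.trace, Matrix.diag, iso, phiPlus, Matrix.one_apply, Fintype.sum_prod_type,
      Fin.sum_univ_two]
    ring
  have h2 : (phiPlus 2 * iso 2 p).trace = (1 + 3 * (p : ℂ)) / 4 := by
    simp [Matrix.trace, Matrix.diag, Matrix.mul_apply, iso, phiPlus, Matrix.one_apply,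
      Fintype.sum_prod_type, Fin.sum_univ_two]
    ring
  simp only [Wstar, sigmaStar4, Matrix.add_mul, Matrix.sub_mul, Matrix.smul_mul,
    Matrix.trace_add, Matrix.trace_sub, Matrix.trace_smul, trace_sl_mul, h1, h2, smul_eq_mul]
  ring
end
end

section
/- On (ℂ²_{A₁} ⊗ ℂ²_{B₁}) ⊗ (ℂ²_{A₂} ⊗ ℂ²_{C₁}) ⊗ (ℂ²_{B₂} ⊗ ℂ²_{C₂}), let W = 𝟙⊗𝟙⊗φ⁺ + 𝟙⊗φ⁺⊗𝟙 + φ⁺⊗𝟙⊗𝟙 − 𝟙⊗φ⁺⊗φ⁺ − φ⁺⊗φ⁺⊗𝟙 − φ⁺⊗𝟙⊗φ⁺ − 3·φ⁺⊗φ⁺⊗φ⁺, where the three tensor slots act on A₁B₁, A₂C₁, B₂C₂ respectively and φ⁺ is the projector onto (|00⟩+|11⟩)/√2. Then for each M ∈ {A, B, C} (with A = A₁A₂, B = B₁B₂, C = C₁C₂) there exist positive semidefinite matrices P_M and Q_M such that W = P_M + Q_M^{Γ_M}, where Γ_M denotes partial transposition with respect to the qubit factors held by M. (Consequently W is a fully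 decomposable genuine-multipartite-entanglement witness for the tripartition A|B|C.) -/
open scoped BigOperators ComplexOrder

noncomputable section

/-- `m₁ ⊗ m₂ ⊗ m₃` on the six-qubit space, the factors acting on qubit pairs
`(0,1), (2,3), (4,5)` = `A₁B₁, A₂C₁, B₂C₂`. -/
def sl3 (m₁ m₂ m₃ : Matrix (Fin 2 × Fin 2) (Fin 2 × Fin 2) ℂ) :
    Matrix (Fin 6 → Fin 2) (Fin 6 → Fin 2) ℂ :=
  fun x y => m₁ (x 0, x 1) (y 0, y 1) * m₂ (x 2, x 3) (y 2, y 3) * m₃ (x 4, x 5) (y 4, y 5)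

/-- The GME witness
`W = 𝟙𝟙φ⁺ + 𝟙φ⁺𝟙 + φ⁺𝟙𝟙 − 𝟙φ⁺φ⁺ − φ⁺φ⁺𝟙 − φ⁺𝟙φ⁺ − 3 φ⁺φ⁺φ⁺` on
`ℂ²_{A₁} ⊗ ℂ²_{B₁} ⊗ ℂ²_{A₂} ⊗ ℂ²_{C₁} ⊗ ℂ²_{B₂} ⊗ ℂ²_{C₂}`
(qubits `0,…,5` = `A₁,B₁,A₂,C₁,B₂,C₂`). -/
noncomputable def Wcc : Matrix (Fin 6 → Fin 2) (Fin 6 → Fin 2) ℂ :=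
  sl3 1 1 (phiPlus 2) + sl3 1 (phiPlus 2) 1 + sl3 (phiPlus 2) 1 1
    - sl3 1 (phiPlus 2) (phiPlus 2) - sl3 (phiPlus 2) (phiPlus 2) 1
    - sl3 (phiPlus 2) 1 (phiPlus 2)
    - (3 : ℂ) • sl3 (phiPlus 2) (phiPlus 2) (phiPlus 2)

/-! Let `φ = φ⁺`, `r = 𝟙 - φ`, and let `g = (𝟙 + F)/2`, `s = (𝟙 - F)/2` be the projectors onto the
symmetric and antisymmetric subspaces of a qubit pair, `F` being the swap. All four are
projectors, hence positive semidefinite, and transposing one qubit of the pair turns `F` into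
`2φ`, so `g^Γ = 𝟙/2 + φ` and `s^Γ = 𝟙/2 - φ`. Hence `(2 (g ⊗ s + s ⊗ g))^Γ = 𝟙 ⊗ 𝟙 - 4 φ ⊗ φ`, and
since `A` holds one qubit of each of the first two slots,
`W = φ ⊗ 𝟙 ⊗ r + r ⊗ φ ⊗ r + (2 (g ⊗ s + s ⊗ g) ⊗ φ)^{Γ_A}`.
For `B` and `C` the slots are permuted. -/

open Matrix
open scoped MatrixOrder

theorem IsStarProjection.posSemidef {n : Type*} [Fintype n] {P : Matrix n n ℂ}
    (hP : IsStarProjection P) : P.PosSemidef :=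
  hP.nonneg.posSemidef

theorem isStarProjection_half_smul_one_add {A : Type*} [Ring A] [StarRing A] [Algebra ℂ A]
    [StarModule ℂ A] {F : A} (hF : IsSelfAdjoint F) (hFF : F * F = 1) :
    IsStarProjection ((1 / 2 : ℂ) • (1 + F)) where
  isIdempotentElem := by
    rw [IsIdempotentElem, smul_mul_smul, add_mul, one_mul, mul_add, mul_one, hFF]
    module
  isSelfAdjoint := by
    refine IsSelfAdjoint.smul ?_ ((IsSelfAdjoint.one A).add hF)
    simp [IsSelfAdjoint]

section TwoFactors

variable {α β : Type*}

def partialTransposeFst : Matrix (α × β) (α × β) ℂ →ₗ[ℂ] Matrix (α × β) (α × β) ℂ where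
  toFun A := Matrix.of fun x y => A (y.1, x.2) (x.1, y.2)
  map_add' _ _ := rfl
  map_smul' _ _ := rfl

def partialTransposeSnd : Matrix (α × β) (α × β) ℂ →ₗ[ℂ] Matrix (α × β) (α × β) ℂ where
  toFun A := Matrix.of fun x y => A (x.1, y.2) (y.1, x.2)
  map_add' _ _ := rfl
  map_smul' _ _ := rfl

@[simp]
theorem partialTransposeFst_apply (A : Matrix (α × β) (α × β) ℂ) (x y : α × β) :
    partialTransposeFst A x y = A (y.1, x.2) (x.1, y.2) := rfl

@[simp]
theorem partialTransposeSnd_apply (A : Matrix (α × β) (α × β) ℂ) (x y : α × β) :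
    partialTransposeSnd A x y = A (x.1, y.2) (y.1, x.2) := rfl

variable [DecidableEq α] [DecidableEq β]

@[simp]
theorem partialTransposeFst_one : partialTransposeFst (1 : Matrix (α × β) (α × β) ℂ) = 1 := by
  ext x y
  simp [one_apply, Prod.ext_iff, eq_comm]

@[simp]
theorem partialTransposeSnd_one : partialTransposeSnd (1 : Matrix (α × β) (α × β) ℂ) = 1 := by
  ext x y
  simp [one_apply, Prod.ext_iff, eq_comm]

end TwoFactors

section Swap

variable {α : Type*} [DecidableEq α]

def swapMatrix : Matrix (α × α) (α × α) ℂ :=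
  Matrix.of fun x y => if x = y.swap then 1 else 0

-- The unnormalized maximally entangled vector `∑ᵢ |ii⟩`.
def maxEntangledVec : α × α → ℂ := fun x => if x.1 = x.2 then 1 else 0

theorem isSelfAdjoint_swapMatrix : IsSelfAdjoint (swapMatrix : Matrix (α × α) (α × α) ℂ) := by
  ext x y
  simp only [swapMatrix, star_apply, of_apply, apply_ite, star_one, star_zero]
  grind

theorem partialTransposeFst_swapMatrix :
    partialTransposeFst (swapMatrix : Matrix (α × α) (α × α) ℂ) =
      vecMulVec maxEntangledVec maxEntangledVec := by
  ext x y
  simp only [partialTransposeFst_apply, swapMatrix, of_apply, vecMulVec_apply, maxEntangledVec,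
    Prod.ext_iff, Prod.fst_swap, Prod.snd_swap]
  grind

theorem partialTransposeSnd_swapMatrix :
    partialTransposeSnd (swapMatrix : Matrix (α × α) (α × α) ℂ) =
      vecMulVec maxEntangledVec maxEntangledVec := by
  ext x y
  simp only [partialTransposeSnd_apply, swapMatrix, of_apply, vecMulVec_apply, maxEntangledVec,
    Prod.ext_iff, Prod.fst_swap, Prod.snd_swap]
  grind

variable [Fintype α]

theorem swapMatrix_mul_self : (swapMatrix : Matrix (α × α) (α × α) ℂ) * swapMatrix = 1 := by
  ext x y
  simp only [swapMatrix, mul_apply, of_apply, one_apply, Prod.ext_iff, Prod.fst_swap,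
    Prod.snd_swap]
  rw [Finset.sum_eq_single (y.2, y.1)] <;> grind

end Swap

theorem phiPlus_eq_smul_vecMulVec (d : ℕ) :
    phiPlus d = (1 / d : ℂ) • vecMulVec maxEntangledVec maxEntangledVec := by
  ext x y
  simp only [phiPlus, Matrix.smul_apply, vecMulVec_apply, maxEntangledVec, smul_eq_mul]
  grind

theorem maxEntangledVec_dotProduct_self (d : ℕ) :
    (maxEntangledVec : Fin d × Fin d → ℂ) ⬝ᵥ maxEntangledVec = d := by
  simp [dotProduct, maxEntangledVec, Fintype.sum_prod_type]

theorem isStarProjection_phiPlus (d : ℕ) : IsStarProjection (phiPlus d) where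
  isIdempotentElem := by
    rcases Nat.eq_zero_or_pos d with rfl | hd
    · exact Subsingleton.elim _ _
    rw [IsIdempotentElem, phiPlus_eq_smul_vecMulVec, smul_mul_smul, vecMulVec_mul_vecMulVec,
      maxEntangledVec_dotProduct_self, vecMulVec_smul, smul_smul]
    congr 1
    field_simp
  isSelfAdjoint := by
    ext x y
    simp only [phiPlus, star_apply, apply_ite (star : ℂ → ℂ), star_div₀, star_one, star_natCast,
      star_zero]
    grind

section Projectors

variable {α : Type*} [DecidableEq α] [Fintype α]

def symProj : Matrix (α × α) (α × α) ℂ := (1 / 2 : ℂ) • (1 + swapMatrix)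

def antisymProj : Matrix (α × α) (α × α) ℂ := (1 / 2 : ℂ) • (1 - swapMatrix)

theorem isStarProjection_symProj : IsStarProjection (symProj : Matrix (α × α) (α × α) ℂ) :=
  isStarProjection_half_smul_one_add isSelfAdjoint_swapMatrix swapMatrix_mul_self

theorem isStarProjection_antisymProj :
    IsStarProjection (antisymProj : Matrix (α × α) (α × α) ℂ) := by
  rw [antisymProj, sub_eq_add_neg]
  exact isStarProjection_half_smul_one_add isSelfAdjoint_swapMatrix.neg
    (by rw [neg_mul_neg, swapMatrix_mul_self])

end Projectors

theorem partialTransposeFst_symProj :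
    partialTransposeFst symProj = (1 / 2 : ℂ) • 1 + phiPlus 2 := by
  rw [symProj, map_smul, map_add, partialTransposeFst_one, partialTransposeFst_swapMatrix,
    phiPlus_eq_smul_vecMulVec]
  push_cast
  module

theorem partialTransposeFst_antisymProj :
    partialTransposeFst antisymProj = (1 / 2 : ℂ) • 1 - phiPlus 2 := by
  rw [antisymProj, map_smul, map_sub, partialTransposeFst_one, partialTransposeFst_swapMatrix,
    phiPlus_eq_smul_vecMulVec]
  push_cast
  module

theorem partialTransposeSnd_symProj :
    partialTransposeSnd symProj = (1 / 2 : ℂ) • 1 + phiPlus 2 := by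
  rw [symProj, map_smul, map_add, partialTransposeSnd_one, partialTransposeSnd_swapMatrix,
    phiPlus_eq_smul_vecMulVec]
  push_cast
  module

theorem partialTransposeSnd_antisymProj :
    partialTransposeSnd antisymProj = (1 / 2 : ℂ) • 1 - phiPlus 2 := by
  rw [antisymProj, map_smul, map_sub, partialTransposeSnd_one, partialTransposeSnd_swapMatrix,
    phiPlus_eq_smul_vecMulVec]
  push_cast
  module

section ThreeSlots

variable {A A' B B' C C' : Matrix (Fin 2 × Fin 2) (Fin 2 × Fin 2) ℂ}

theorem Matrix.PosSemidef.sl3 (hA : A.PosSemidef) (hB : B.PosSemidef) (hC : C.PosSemidef) :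
    (sl3 A B C).PosSemidef :=
  ((hA.kronecker hB).kronecker hC).submatrix fun x : Fin 6 → Fin 2 =>
    (((x 0, x 1), (x 2, x 3)), (x 4, x 5))

variable (A A' B B' C C')

theorem sl3_add₁ : sl3 (A + A') B C = sl3 A B C + sl3 A' B C := by
  ext x y; simp only [sl3, Matrix.add_apply]; ring
theorem sl3_add₂ : sl3 A (B + B') C = sl3 A B C + sl3 A B' C := by
  ext x y; simp only [sl3, Matrix.add_apply]; ring
theorem sl3_add₃ : sl3 A B (C + C') = sl3 A B C + sl3 A B C' := by
  ext x y; simp only [sl3, Matrix.add_apply]; ring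
theorem sl3_sub₁ : sl3 (A - A') B C = sl3 A B C - sl3 A' B C := by
  ext x y; simp only [sl3, Matrix.sub_apply]; ring
theorem sl3_sub₂ : sl3 A (B - B') C = sl3 A B C - sl3 A B' C := by
  ext x y; simp only [sl3, Matrix.sub_apply]; ring
theorem sl3_sub₃ : sl3 A B (C - C') = sl3 A B C - sl3 A B C' := by
  ext x y; simp only [sl3, Matrix.sub_apply]; ring
theorem sl3_smul₁ (c : ℂ) : sl3 (c • A) B C = c • sl3 A B C := by
  ext x y; simp only [sl3, Matrix.smul_apply, smul_eq_mul]; ring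
theorem sl3_smul₂ (c : ℂ) : sl3 A (c • B) C = c • sl3 A B C := by
  ext x y; simp only [sl3, Matrix.smul_apply, smul_eq_mul]; ring
theorem sl3_smul₃ (c : ℂ) : sl3 A B (c • C) = c • sl3 A B C := by
  ext x y; simp only [sl3, Matrix.smul_apply, smul_eq_mul]; ring

theorem ptr_sl3_A :
    ptr {0, 2} (sl3 A B C) = sl3 (partialTransposeFst A) (partialTransposeFst B) C := by
  ext x y; simp [ptr, sl3]

theorem ptr_sl3_B :
    ptr {1, 4} (sl3 A B C) = sl3 (partialTransposeSnd A) B (partialTransposeFst C) := by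
  ext x y; simp [ptr, sl3]

theorem ptr_sl3_C :
    ptr {3, 5} (sl3 A B C) = sl3 A (partialTransposeSnd B) (partialTransposeSnd C) := by
  ext x y; simp [ptr, sl3]

end ThreeSlots

theorem ptr_add {n : ℕ} (S : Finset (Fin n)) (X Y : Matrix (Fin n → Fin 2) (Fin n → Fin 2) ℂ) :
    ptr S (X + Y) = ptr S X + ptr S Y := rfl

theorem ptr_smul {n : ℕ} (S : Finset (Fin n)) (c : ℂ)
    (X : Matrix (Fin n → Fin 2) (Fin n → Fin 2) ℂ) : ptr S (c • X) = c • ptr S X := rfl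

theorem Wcc_eq_A : Wcc = sl3 (phiPlus 2) 1 (1 - phiPlus 2)
      + sl3 (1 - phiPlus 2) (phiPlus 2) (1 - phiPlus 2)
      + ptr {0, 2} ((2 : ℂ) • (sl3 symProj antisymProj (phiPlus 2)
        + sl3 antisymProj symProj (phiPlus 2))) := by
  rw [ptr_smul, ptr_add, ptr_sl3_A, ptr_sl3_A, partialTransposeFst_symProj,
    partialTransposeFst_antisymProj]
  simp only [Wcc, sl3_add₁, sl3_add₂, sl3_sub₁, sl3_sub₂, sl3_sub₃, sl3_smul₁, sl3_smul₂]
  module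

theorem Wcc_eq_B : Wcc = sl3 (phiPlus 2) (1 - phiPlus 2) 1
      + sl3 (1 - phiPlus 2) (1 - phiPlus 2) (phiPlus 2)
      + ptr {1, 4} ((2 : ℂ) • (sl3 symProj (phiPlus 2) antisymProj
        + sl3 antisymProj (phiPlus 2) symProj)) := by
  rw [ptr_smul, ptr_add, ptr_sl3_B, ptr_sl3_B, partialTransposeSnd_symProj,
    partialTransposeSnd_antisymProj, partialTransposeFst_symProj, partialTransposeFst_antisymProj]
  simp only [Wcc, sl3_add₁, sl3_add₃, sl3_sub₁, sl3_sub₂, sl3_sub₃, sl3_smul₁, sl3_smul₃]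
  module

theorem Wcc_eq_C : Wcc = sl3 (1 - phiPlus 2) (phiPlus 2) 1
      + sl3 (1 - phiPlus 2) (1 - phiPlus 2) (phiPlus 2)
      + ptr {3, 5} ((2 : ℂ) • (sl3 (phiPlus 2) symProj antisymProj
        + sl3 (phiPlus 2) antisymProj symProj)) := by
  rw [ptr_smul, ptr_add, ptr_sl3_C, ptr_sl3_C, partialTransposeSnd_symProj,
    partialTransposeSnd_antisymProj]
  simp only [Wcc, sl3_add₂, sl3_add₃, sl3_sub₁, sl3_sub₂, sl3_sub₃, sl3_smul₂, sl3_smul₃]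
  module

/-- For each party `M ∈ {A, B, C}` (with `A` holding qubits `0, 2`, `B` qubits `1, 4`,
and `C` qubits `3, 5`) there are positive semidefinite `P_M, Q_M` with
`W = P_M + Q_M^{Γ_M}`; hence `W` is a fully decomposable GME witness for the
tripartition `A|B|C`. -/
theorem Wcc_fully_decomposable :
    (∃ P Q : Matrix (Fin 6 → Fin 2) (Fin 6 → Fin 2) ℂ,
        P.PosSemidef ∧ Q.PosSemidef ∧ Wcc = P + ptr {0, 2} Q) ∧
    (∃ P Q : Matrix (Fin 6 → Fin 2) (Fin 6 → Fin 2) ℂ,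
        P.PosSemidef ∧ Q.PosSemidef ∧ Wcc = P + ptr {1, 4} Q) ∧
    (∃ P Q : Matrix (Fin 6 → Fin 2) (Fin 6 → Fin 2) ℂ,
        P.PosSemidef ∧ Q.PosSemidef ∧ Wcc = P + ptr {3, 5} Q) := by
  have hφ : (phiPlus 2).PosSemidef := (isStarProjection_phiPlus 2).posSemidef
  have hr : (1 - phiPlus 2).PosSemidef := (isStarProjection_phiPlus 2).one_sub.posSemidef
  have hg : (symProj : Matrix (Fin 2 × Fin 2) (Fin 2 × Fin 2) ℂ).PosSemidef :=
    isStarProjection_symProj.posSemidef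
  have hs : (antisymProj : Matrix (Fin 2 × Fin 2) (Fin 2 × Fin 2) ℂ).PosSemidef :=
    isStarProjection_antisymProj.posSemidef
  have h2 : (0 : ℂ) ≤ 2 := by norm_num
  refine ⟨⟨_, _, ?_, ?_, Wcc_eq_A⟩, ⟨_, _, ?_, ?_, Wcc_eq_B⟩, ⟨_, _, ?_, ?_, Wcc_eq_C⟩⟩
  · exact (hφ.sl3 .one hr).add (hr.sl3 hφ hr)
  · exact ((hg.sl3 hs hφ).add (hs.sl3 hg hφ)).smul h2
  · exact (hφ.sl3 hr .one).add (hr.sl3 hr hφ)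
  · exact ((hg.sl3 hφ hs).add (hs.sl3 hφ hg)).smul h2
  · exact (hr.sl3 hφ .one).add (hr.sl3 hr hφ)
  · exact ((hφ.sl3 hg hs).add (hφ.sl3 hs hg)).smul h2
end
end

section
/- Let d ≥ 2, n ≥ 3, let |GHZ⟩ = (1/√d)∑_{i=0}^{d−1} |i⟩^{⊗n} be the n-partite d-dimensional GHZ state with projector GHZ = |GHZ⟩⟨GHZ| on (ℂ^d)^{⊗n}, and for p ∈ [0,1] define τ_f(p) = p·GHZ + ((1−p)/d²) ∑_{i,j=0}^{d−1} |i⟩⟨i| ⊗ |j⟩⟨j| ⊗ (|i⟩⟨i|)^{⊗(n−2)}. Then tr((𝟙/d − GHZ) · τ_f(p)) = (d − 1 − p(d² − 1))/d², which is strictly negative if and only if p > 1/(d+1). -/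
open scoped BigOperators ComplexOrder

noncomputable section

/-- Projector onto the `n`-partite `d`-dimensional GHZ state
`|GHZ⟩ = (1/√d) ∑ᵢ |i⟩^{⊗n}` on `(ℂ^d)^{⊗n}`. -/
def ghzProj (n d : ℕ) (hn : 3 ≤ n) : Matrix (Fin n → Fin d) (Fin n → Fin d) ℂ :=
  fun x y =>
    if (∀ k, x k = x ⟨0, by omega⟩) ∧ (∀ k, y k = y ⟨0, by omega⟩) then (1 / (d : ℂ))
    else 0

/-- The diagonal operator `∑_{i,j} |i⟩⟨i| ⊗ |j⟩⟨j| ⊗ (|i⟩⟨i|)^{⊗(n−2)}`: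
tensor factor `0` is party `A`, factor `1` is party `B₁`, and factors `2,…,n−1`
(equal to factor `0`) are parties `B₂,…,B_{n−1}`. -/
def ghzNoise (n d : ℕ) (hn : 3 ≤ n) : Matrix (Fin n → Fin d) (Fin n → Fin d) ℂ :=
  fun x y =>
    if x = y ∧ ∀ k, k ≠ ⟨1, by omega⟩ → x k = x ⟨0, by omega⟩ then 1 else 0

/-- The state `τ_f(p) = p · GHZ + ((1−p)/d²) ∑_{i,j} |i⟩⟨i| ⊗ |j⟩⟨j| ⊗ (|i⟩⟨i|)^{⊗(n−2)}`. -/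
def tauF (n d : ℕ) (hn : 3 ≤ n) (p : ℝ) : Matrix (Fin n → Fin d) (Fin n → Fin d) ℂ :=
  (p : ℂ) • ghzProj n d hn + (((1 - p) / (d : ℝ) ^ 2 : ℝ) : ℂ) • ghzNoise n d hn

section aux
variable {n d : ℕ}

variable {n d : ℕ}

lemma sum_ghz_support (hn : 3 ≤ n) (c : ℂ) :
    ∑ x : Fin n → Fin d, (if ∀ k, x k = x ⟨0, by omega⟩ then c else 0) = d * c := by
  have key : ∀ x : Fin n → Fin d,
      (if ∀ k, x k = x ⟨0, by omega⟩ then c else 0)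
        = ∑ j : Fin d, (if x = Function.const (Fin n) j then c else 0) := by
    intro x
    by_cases h : ∀ k, x k = x ⟨0, by omega⟩
    · rw [if_pos h, Finset.sum_eq_single (x ⟨0, by omega⟩)]
      · rw [if_pos]; funext k; exact h k
      · intro j _ hj
        rw [if_neg]
        intro he
        exact hj (by rw [he]; rfl)
      · simp
    · rw [if_neg h]
      refine (Finset.sum_eq_zero ?_).symm
      intro j _
      rw [if_neg]
      intro he
      exact h (by intro k; rw [he]; rfl)
  rw [Finset.sum_congr rfl fun x _ => key x, Finset.sum_comm]
  simp [Finset.sum_ite_eq' Finset.univ, Finset.sum_const, mul_comm]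

lemma sum_noise_support (hn : 3 ≤ n) (c : ℂ) :
    ∑ x : Fin n → Fin d,
      (if ∀ k, k ≠ (⟨1, by omega⟩ : Fin n) → x k = x ⟨0, by omega⟩ then c else 0)
      = (d : ℂ) ^ 2 * c := by
  set g : Fin d × Fin d → (Fin n → Fin d) :=
    fun q k => if k = (⟨1, by omega⟩ : Fin n) then q.2 else q.1 with hg
  have h01 : (⟨0, by omega⟩ : Fin n) ≠ ⟨1, by omega⟩ := by
    simp [Fin.ext_iff]
  have key : ∀ x : Fin n → Fin d,
      (if ∀ k, k ≠ (⟨1, by omega⟩ : Fin n) → x k = x ⟨0, by omega⟩ then c else 0)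
        = ∑ q : Fin d × Fin d, (if x = g q then c else 0) := by
    intro x
    by_cases h : ∀ k, k ≠ (⟨1, by omega⟩ : Fin n) → x k = x ⟨0, by omega⟩
    · rw [if_pos h, Finset.sum_eq_single ((x ⟨0, by omega⟩, x ⟨1, by omega⟩))]
      · rw [if_pos]
        funext k
        by_cases hk : k = (⟨1, by omega⟩ : Fin n)
        · simp [hg, hk]
        · simp [hg, hk, h k hk]
      · intro q _ hq
        rw [if_neg]
        intro he
        apply hq
        have h1 : x ⟨0, by omega⟩ = q.1 := by rw [he]; simp [hg, h01]
        have h2 : x ⟨1, by omega⟩ = q.2 := by rw [he]; simp [hg]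
        rw [h1, h2]
      · simp
    · rw [if_neg h]
      refine (Finset.sum_eq_zero ?_).symm
      intro q _
      rw [if_neg]
      intro he
      apply h
      intro k hk
      rw [he]
      simp [hg, hk, h01]
  rw [Finset.sum_congr rfl fun x _ => key x, Finset.sum_comm]
  simp [Finset.sum_ite_eq' Finset.univ, Finset.sum_const, mul_comm, sq]


lemma trace_ghz (hn : 3 ≤ n) (hd : d ≠ 0) : (ghzProj n d hn).trace = 1 := by
  have : (ghzProj n d hn).trace
      = ∑ x : Fin n → Fin d, (if ∀ k, x k = x ⟨0, by omega⟩ then (1 / (d : ℂ)) else 0) := by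
    refine Finset.sum_congr rfl fun x _ => ?_
    simp [ghzProj, Matrix.diag, and_self]
  rw [this, sum_ghz_support hn]
  field_simp

lemma trace_noise (hn : 3 ≤ n) : (ghzNoise n d hn).trace = (d : ℂ) ^ 2 := by
  have : (ghzNoise n d hn).trace
      = ∑ x : Fin n → Fin d,
          (if ∀ k, k ≠ (⟨1, by omega⟩ : Fin n) → x k = x ⟨0, by omega⟩ then (1:ℂ) else 0) := by
    refine Finset.sum_congr rfl fun x _ => ?_
    simp [ghzNoise, Matrix.diag]
  rw [this, sum_noise_support hn, mul_one]

lemma trace_gg (hn : 3 ≤ n) (hd : d ≠ 0) :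
    (ghzProj n d hn * ghzProj n d hn).trace = 1 := by
  have h1 : (ghzProj n d hn * ghzProj n d hn).trace
      = ∑ x : Fin n → Fin d, (if ∀ k, x k = x ⟨0, by omega⟩ then
          (∑ y : Fin n → Fin d, (if ∀ k, y k = y ⟨0, by omega⟩ then
            (1 / (d : ℂ)) * (1 / (d : ℂ)) else 0)) else 0) := by
    refine Finset.sum_congr rfl fun x _ => ?_
    simp only [Matrix.diag, Matrix.mul_apply, ghzProj]
    by_cases hx : ∀ k, x k = x ⟨0, by omega⟩
    · rw [if_pos hx]
      refine Finset.sum_congr rfl fun y _ => ?_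
      by_cases hy : ∀ k, y k = y ⟨0, by omega⟩
      · simp [hx, hy]
      · simp [hy]
    · rw [if_neg hx]
      refine Finset.sum_eq_zero fun y _ => ?_
      simp [hx]
  rw [h1, sum_ghz_support hn, sum_ghz_support hn]
  field_simp

lemma trace_gn (hn : 3 ≤ n) (hd : d ≠ 0) :
    (ghzProj n d hn * ghzNoise n d hn).trace = 1 := by
  have h1 : (ghzProj n d hn * ghzNoise n d hn).trace
      = ∑ x : Fin n → Fin d, (if ∀ k, x k = x ⟨0, by omega⟩ then (1 / (d : ℂ)) else 0) := by
    refine Finset.sum_congr rfl fun x _ => ?_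
    simp only [Matrix.diag, Matrix.mul_apply, ghzProj, ghzNoise]
    rw [Finset.sum_eq_single x]
    · by_cases hx : ∀ k, x k = x ⟨0, by omega⟩
      · have hq : ∀ k, k ≠ (⟨1, by omega⟩ : Fin n) → x k = x ⟨0, by omega⟩ :=
          fun k _ => hx k
        simp [hx, hq]
      · simp [hx]
    · intro y _ hy
      have : ¬(y = x ∧ ∀ k, k ≠ (⟨1, by omega⟩ : Fin n) → y k = y ⟨0, by omega⟩) := by
        rintro ⟨h, -⟩; exact hy h
      simp [this]
    · simp
  rw [h1, sum_ghz_support hn]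
  field_simp
end aux

/-- `tr((𝟙/d − GHZ) τ_f(p)) = (d − 1 − p(d² − 1))/d²`, which is strictly negative iff
`p > 1/(d+1)`. -/
theorem ghz_witness_expectation (n d : ℕ) (hn : 3 ≤ n) (hd : 2 ≤ d)
    (p : ℝ) (hp0 : 0 ≤ p) (hp1 : p ≤ 1) :
    Matrix.trace
        ((((d : ℂ))⁻¹ • (1 : Matrix (Fin n → Fin d) (Fin n → Fin d) ℂ) - ghzProj n d hn)
          * tauF n d hn p) =
      (((d : ℂ) - 1 - (p : ℂ) * ((d : ℂ) ^ 2 - 1)) / (d : ℂ) ^ 2) ∧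
    ((((d : ℝ) - 1 - p * ((d : ℝ) ^ 2 - 1)) / (d : ℝ) ^ 2 < 0) ↔ 1 / ((d : ℝ) + 1) < p) := by
  have hd0 : d ≠ 0 := by omega
  have hdC : (d : ℂ) ≠ 0 := Nat.cast_ne_zero.mpr hd0
  constructor
  · rw [tauF]
    simp only [Matrix.sub_mul, Matrix.mul_add, smul_mul_assoc, Matrix.one_mul,
      mul_smul_comm, Matrix.trace_sub, Matrix.trace_add, Matrix.trace_smul,
      trace_ghz hn hd0, trace_noise hn, trace_gg hn hd0, trace_gn hn hd0,
      smul_eq_mul]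
    push_cast
    field_simp
    ring
  · have hdR : (2 : ℝ) ≤ (d : ℝ) := by exact_mod_cast hd
    have h2 : (0 : ℝ) < (d : ℝ) ^ 2 := by positivity
    have h3 : (0 : ℝ) < (d : ℝ) + 1 := by linarith
    have h4 : (0 : ℝ) < (d : ℝ) - 1 := by linarith
    rw [div_lt_iff₀ h3, div_neg_iff]
    constructor
    · rintro (⟨-, hb⟩ | ⟨ha, -⟩)
      · linarith
      · nlinarith
    · intro h
      right
      exact ⟨by nlinarith, h2⟩
end
end
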